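/- arXiv:2110.12933 — 2 statements merged into one kernel-verified Lean document; each statement's English description precedes it below -/
import Mathlib

section
/- Let K be a field, X = {x₁,…,xₙ}, and ⪯ a monomial ordering on ⟨X⟩. Let I be a nonzero two-sided ideal of K⟨X⟩ such that I, viewed as a right ideal, admits a finite right Gröbner basis G, i.e., G is a finite right generating set of I and for every nonzero f ∈ I there exist g ∈ G and b ∈ ⟨X⟩ with lm(f) = lm(g)·b. Then I is zero-dimensional, i.e., the quotient K⟨X⟩/I is finite-dimensional as a K-vector space. -/
open scoped BigOperators

/-- The right ideal generated by a set `S`, i.e. the set of finite sums `∑ fᵢ * qᵢ`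
with `fᵢ ∈ S` and `qᵢ` arbitrary ring elements. -/
def rightIdealSpan {A : Type*} [Semiring A] (S : Set A) : Set A :=
  {x | ∃ (d : ℕ) (f q : Fin d → A), (∀ i, f i ∈ S) ∧ x = ∑ i, f i * q i}

/-- The leading monomial of `f ∈ K⟨X⟩` with respect to a linear order `ord` on the free
monoid of monomials: the `ord`-largest element of the support of `f` (and `1` if `f = 0`).
Here `K⟨X⟩` is realized as the monoid algebra of the free monoid `⟨X⟩`, so that monomials
form its canonical basis. -/
noncomputable def lm {K : Type*} [Field K] {n : ℕ} (ord : LinearOrder (FreeMonoid (Fin n)))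
    (f : MonoidAlgebra K (FreeMonoid (Fin n))) : FreeMonoid (Fin n) :=
  if h : f.coeff.support.Nonempty then @Finset.max' _ ord f.coeff.support h else 1

/-!
The two-sided ideal `I` is spanned, as a right ideal, by elements whose leading monomials are
the prefix-minimal leading monomials of `I`.  These leading monomials form a prefix antichain,
so in a right combination `∑ gᵢ qᵢ` of such elements the leading monomials `lm(gᵢ) lm(qᵢ)` of
the summands are pairwise distinct and cannot cancel.  As `I` is generated by finitely many
of its elements, finitely many of them suffice, and they form a finite right Gröbner basis
of nonzero elements.  If `ℓ` bounds the lengths of their leading monomials and `0 ≠ f₀ ∈ I`,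
then for every monomial `m` of length `≥ ℓ` the leading monomial `m · lm(f₀)` of `m f₀ ∈ I`
has a prefix `lm(g)` of length `≤ |m|`, so `m = lm(g) d` is the leading monomial of
`g d ∈ I`.  Hence only the finitely many monomials of length `< ℓ` are standard, and they
span `K⟨X⟩ / I`.
-/

theorem subset_rightIdealSpan {A : Type*} [Semiring A] (S : Set A) : S ⊆ rightIdealSpan S :=
  fun g hg => ⟨1, fun _ => g, fun _ => 1, fun _ => hg, by simp⟩

theorem rightIdealSpan_subset_span {A : Type*} [Semiring A] (S : Set A) :
    rightIdealSpan S ⊆ Submodule.span Aᵐᵒᵖ S := by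
  rintro x ⟨d, f, q, hf, rfl⟩
  exact Submodule.sum_mem _ fun i _ => Submodule.smul_mem _ (MulOpposite.op (q i))
    (Submodule.subset_span (hf i))

namespace FreeMonoid

variable {α : Type*}

theorem exists_eq_mul_or_exists_eq_mul_of_mul_eq_mul {u v s t : FreeMonoid α}
    (h : u * s = v * t) : (∃ d, v = u * d) ∨ ∃ d, u = v * d := by
  have h' : u.toList ++ s.toList = v.toList ++ t.toList := by
    simpa only [toList_mul] using congrArg toList h
  rcases List.append_eq_append_iff.1 h' with ⟨d, hd, -⟩ | ⟨d, hd, -⟩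
  · exact .inl ⟨ofList d, toList.injective (by simpa using hd)⟩
  · exact .inr ⟨ofList d, toList.injective (by simpa using hd)⟩

theorem exists_eq_mul_of_mul_eq_mul_of_length_le {u v s t : FreeMonoid α} (h : u * s = v * t)
    (hlen : v.length ≤ u.length) : ∃ d, u = v * d := by
  rcases exists_eq_mul_or_exists_eq_mul_of_mul_eq_mul h with ⟨d, rfl⟩ | hd
  · rw [length_mul] at hlen
    obtain rfl : d = 1 := length_eq_zero.1 (by omega)
    exact ⟨1, by simp⟩
  · exact hd

theorem finite_setOf_length_lt [Finite α] (ℓ : ℕ) : {m : FreeMonoid α | m.length < ℓ}.Finite :=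
  (List.finite_length_lt α ℓ).preimage toList.injective.injOn

end FreeMonoid

def IsMulCompatible {M : Type*} [Monoid M] (ord : LinearOrder M) : Prop :=
  ∀ a b m m' : M, ord.le m m' → ord.le (a * m * b) (a * m' * b)

section LeadingMonomial

variable {K : Type*} [Field K] {n : ℕ} (ord : LinearOrder (FreeMonoid (Fin n)))

local notation "K⟨X⟩" => MonoidAlgebra K (FreeMonoid (Fin n))

open MonoidAlgebra

theorem lm_mem_support {f : K⟨X⟩} (hf : f ≠ 0) : lm ord f ∈ f.coeff.support := by
  rw [lm, dif_pos (Finsupp.support_nonempty_iff.2 (mt coeff_eq_zero.1 hf))]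
  exact @Finset.max'_mem _ ord _ _

theorem le_lm {f : K⟨X⟩} {w : FreeMonoid (Fin n)} (hw : w ∈ f.coeff.support) :
    ord.le w (lm ord f) := by
  rw [lm, dif_pos ⟨w, hw⟩]
  exact @Finset.le_max' _ ord _ _ hw

theorem lm_eq_of_forall_le {f : K⟨X⟩} {w : FreeMonoid (Fin n)} (hw : w ∈ f.coeff.support)
    (hmax : ∀ v ∈ f.coeff.support, ord.le v w) : lm ord f = w :=
  ord.le_antisymm _ _ (hmax _ (lm_mem_support ord (by rintro rfl; simp at hw))) (le_lm ord hw)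

theorem lm_single (w : FreeMonoid (Fin n)) {c : K} (hc : c ≠ 0) : lm ord (single w c) = w := by
  have hsupp : (single w c).coeff.support = {w} := by
    rw [coeff_single, Finsupp.support_single _ hc]
  refine lm_eq_of_forall_le ord (hsupp ▸ Finset.mem_singleton_self w) fun v hv => ?_
  rw [hsupp, Finset.mem_singleton] at hv
  exact hv ▸ ord.le_refl w

theorem lm_mul (hcomp : IsMulCompatible ord) {p q : K⟨X⟩} (hp : p ≠ 0) (hq : q ≠ 0) :
    lm ord (p * q) = lm ord p * lm ord q := by
  classical
  let _ := ord
  have hmono : ∀ {a b}, a ∈ p.coeff.support → b ∈ q.coeff.support →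
      a * b ≤ lm ord p * b ∧ lm ord p * b ≤ lm ord p * lm ord q := fun ha hb =>
    ⟨by simpa using hcomp 1 _ _ _ (le_lm ord ha), by simpa using hcomp _ 1 _ _ (le_lm ord hb)⟩
  have huniq : UniqueMul p.coeff.support q.coeff.support (lm ord p) (lm ord q) := by
    intro a b ha hb hab
    obtain ⟨h₁, h₂⟩ := hmono ha hb
    obtain rfl := mul_left_cancel (le_antisymm h₂ (hab.symm.le.trans h₁))
    exact ⟨mul_right_cancel hab, rfl⟩
  refine lm_eq_of_forall_le ord ?_ fun v hv => ?_
  · rw [Finsupp.mem_support_iff, coeff_mul_mul_of_uniqueMul huniq]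
    exact mul_ne_zero (Finsupp.mem_support_iff.1 (lm_mem_support ord hp))
      (Finsupp.mem_support_iff.1 (lm_mem_support ord hq))
  · obtain ⟨a, ha, b, hb, rfl⟩ := Finset.mem_mul.1 (support_coeff_mul_subset p q hv)
    exact (hmono ha hb).1.trans (hmono ha hb).2

theorem lm_add_eq_of_forall_lt {p q : K⟨X⟩} (hp : p ≠ 0)
    (hq : ∀ v ∈ q.coeff.support, ord.lt v (lm ord p)) : lm ord (p + q) = lm ord p := by
  classical
  let _ := ord
  have hlm : lm ord p ∉ q.coeff.support := fun h => lt_irrefl _ (hq _ h)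
  refine lm_eq_of_forall_le ord ?_ fun v hv => ?_
  · rw [Finsupp.mem_support_iff, coeff_add, Finsupp.add_apply, Finsupp.notMem_support_iff.1 hlm,
      add_zero]
    exact Finsupp.mem_support_iff.1 (lm_mem_support ord hp)
  · rw [coeff_add] at hv
    rcases Finset.mem_union.1 (Finsupp.support_add hv) with hv | hv
    exacts [le_lm ord hv, (hq v hv).le]

theorem exists_lm_sum_eq {ι : Type*} {s : Finset ι} {F : ι → K⟨X⟩} (hs : s.Nonempty)
    (hF : ∀ i ∈ s, F i ≠ 0) (hinj : Set.InjOn (fun i => lm ord (F i)) s) :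
    ∃ i ∈ s, lm ord (∑ j ∈ s, F j) = lm ord (F i) := by
  classical
  let _ := ord
  obtain ⟨i, hi, hmax⟩ := s.exists_max_image (fun i => lm ord (F i)) hs
  refine ⟨i, hi, ?_⟩
  rw [← Finset.add_sum_erase s F hi]
  refine lm_add_eq_of_forall_lt ord (hF i hi) fun v hv => ?_
  rw [coeff_sum] at hv
  obtain ⟨j, hj, hvj⟩ := Finset.mem_biUnion.1 (Finsupp.support_finsetSum hv)
  obtain ⟨hji, hj⟩ := Finset.mem_erase.1 hj
  exact (le_lm ord hvj).trans_lt
    ((hmax j hj).lt_of_ne fun h => hji (hinj hj hi h))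

theorem lt_lm_of_mem_support_sub_smul {f p : K⟨X⟩} (hp : p ≠ 0) (h : lm ord p = lm ord f) :
    ∀ v ∈ (f - (f.coeff (lm ord f) / p.coeff (lm ord f)) • p).coeff.support,
      ord.lt v (lm ord f) := by
  classical
  let _ := ord
  have hp' : p.coeff (lm ord f) ≠ 0 := h ▸ Finsupp.mem_support_iff.1 (lm_mem_support ord hp)
  intro v hv
  rw [coeff_sub, coeff_smul] at hv
  refine lt_of_le_of_ne ?_ fun hvf => Finsupp.mem_support_iff.1 hv ?_
  · rcases Finset.mem_union.1 (Finsupp.support_sub hv) with hv | hv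
    exacts [le_lm ord hv, h ▸ le_lm ord (Finsupp.support_smul hv)]
  · rw [hvf, Finsupp.sub_apply, Finsupp.smul_apply, smul_eq_mul, div_mul_cancel₀ _ hp', sub_self]

theorem le_of_forall_exists_lm_eq (hwo : WellFounded ord.lt) {J W : Submodule K K⟨X⟩}
    (h : ∀ f ∈ J, f ≠ 0 → ∃ p ∈ J ⊓ W, p ≠ 0 ∧ lm ord p = lm ord f) : J ≤ W := by
  suffices ∀ m, ∀ f ∈ J, lm ord f = m → f ∈ W from fun f hf => this _ f hf rfl
  intro m
  induction m using hwo.induction with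
  | _ m ih =>
  rintro f hf rfl
  by_cases hf0 : f = 0
  · exact hf0 ▸ W.zero_mem
  obtain ⟨p, ⟨hpJ, hpW⟩, hp0, hlm⟩ := h f hf hf0
  set c := f.coeff (lm ord f) / p.coeff (lm ord f)
  have hred : f - c • p ∈ W := by
    by_cases hred0 : f - c • p = 0
    · exact hred0 ▸ W.zero_mem
    exact ih _ (lt_lm_of_mem_support_sub_smul ord hp0 hlm _ (lm_mem_support ord hred0)) _
      (J.sub_mem hf (J.smul_mem c hpJ)) rfl
  simpa using W.add_mem hred (W.smul_mem c hpW)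

variable (I : Submodule K (MonoidAlgebra K (FreeMonoid (Fin n))))

def leadingMonomials : Set (FreeMonoid (Fin n)) :=
  {m | ∃ f ∈ I, f ≠ 0 ∧ lm ord f = m}

def minimalLeadingMonomials : Set (FreeMonoid (Fin n)) :=
  {m | m ∈ leadingMonomials ord I ∧ ∀ u b, m = u * b → u ∈ leadingMonomials ord I → b = 1}

noncomputable def lmWitness (m : FreeMonoid (Fin n)) : K⟨X⟩ :=
  Function.invFunOn (lm ord) {f | f ∈ I ∧ f ≠ 0} m

variable {ord I}

theorem lmWitness_spec {m : FreeMonoid (Fin n)} (hm : m ∈ leadingMonomials ord I) :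
    lmWitness ord I m ∈ I ∧ lmWitness ord I m ≠ 0 ∧ lm ord (lmWitness ord I m) = m := by
  obtain ⟨f, hf, hf0, rfl⟩ := hm
  obtain ⟨⟨hI, h0⟩, hlm⟩ :=
    Function.invFunOn_pos (f := lm ord) (s := {f | f ∈ I ∧ f ≠ 0}) ⟨f, ⟨hf, hf0⟩, rfl⟩
  exact ⟨hI, h0, hlm⟩

theorem exists_mem_minimalLeadingMonomials_mul {m : FreeMonoid (Fin n)}
    (hm : m ∈ leadingMonomials ord I) : ∃ u ∈ minimalLeadingMonomials ord I, ∃ b, m = u * b := by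
  obtain ⟨u, ⟨hu, b, hub⟩, hmin⟩ := (measure FreeMonoid.length).wf.has_min
    {u | u ∈ leadingMonomials ord I ∧ ∃ b, m = u * b} ⟨m, hm, 1, (mul_one m).symm⟩
  refine ⟨u, ⟨hu, fun u' b' hu' hu'I => ?_⟩, b, hub⟩
  have hlen : ¬ u'.length < u.length := hmin u' ⟨hu'I, b' * b, by rw [hub, hu', mul_assoc]⟩
  rw [hu', FreeMonoid.length_mul] at hlen
  exact FreeMonoid.length_eq_zero.1 (by omega)

theorem le_span_lmWitness (hwo : WellFounded ord.lt) (hcomp : IsMulCompatible ord)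
    (hR : ∀ a x : K⟨X⟩, x ∈ I → x * a ∈ I) :
    I ≤ (Submodule.span K⟨X⟩ᵐᵒᵖ
      (lmWitness ord I '' minimalLeadingMonomials ord I)).restrictScalars K := by
  refine le_of_forall_exists_lm_eq ord hwo fun f hf hf0 => ?_
  obtain ⟨u, hu, b, hub⟩ := exists_mem_minimalLeadingMonomials_mul ⟨f, hf, hf0, rfl⟩
  obtain ⟨huI, hu0, hulm⟩ := lmWitness_spec hu.1
  have hb0 : single b (1 : K) ≠ 0 := by simp
  refine ⟨lmWitness ord I u * single b 1, ⟨hR _ _ huI, ?_⟩, mul_ne_zero hu0 hb0, ?_⟩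
  · exact Submodule.smul_mem _ (MulOpposite.op (single b 1))
      (Submodule.subset_span ⟨u, hu, rfl⟩)
  · rw [lm_mul ord hcomp hu0 hb0, lm_single ord b one_ne_zero, hulm, hub]

theorem lmWitness_eq_of_lm_eq_mul {u u' d : FreeMonoid (Fin n)}
    (hu : u ∈ minimalLeadingMonomials ord I) (hu' : u' ∈ minimalLeadingMonomials ord I)
    (h : lm ord (lmWitness ord I u') = lm ord (lmWitness ord I u) * d) :
    lmWitness ord I u' = lmWitness ord I u := by
  rw [(lmWitness_spec hu.1).2.2, (lmWitness_spec hu'.1).2.2] at h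
  rw [h, hu'.2 u d h hu.1, mul_one]

/-- `hS` says that the leading monomials of `S` are distinct and form a prefix antichain, so the
leading terms of a right combination of elements of `S` cannot cancel. -/
theorem exists_lm_eq_lm_mul_of_mem_span (hcomp : IsMulCompatible ord) {S : Finset K⟨X⟩}
    (hS0 : ∀ g ∈ S, g ≠ 0) (hS : ∀ g ∈ S, ∀ g' ∈ S, ∀ d, lm ord g' = lm ord g * d → g' = g)
    {f : K⟨X⟩} (hf : f ∈ Submodule.span K⟨X⟩ᵐᵒᵖ (S : Set K⟨X⟩)) (hf0 : f ≠ 0) :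
    ∃ g ∈ S, ∃ b, lm ord f = lm ord g * b := by
  classical
  obtain ⟨Q, -, rfl⟩ := Submodule.mem_span_finset.1 hf
  set T := S.filter fun g => Q g ≠ 0
  have hsum : ∑ g ∈ S, Q g • g = ∑ g ∈ T, g * (Q g).unop := by
    rw [← Finset.sum_filter_of_ne fun g _ hg =>
      show Q g ≠ 0 from fun h => hg (by rw [h, zero_smul])]
    rfl
  have hT0 : ∀ g ∈ T, g * (Q g).unop ≠ 0 := fun g hg =>
    mul_ne_zero (hS0 g (Finset.mem_filter.1 hg).1)
      (MulOpposite.unop_ne_zero_iff _ |>.2 (Finset.mem_filter.1 hg).2)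
  have hlmT : ∀ g ∈ T, lm ord (g * (Q g).unop) = lm ord g * lm ord (Q g).unop := fun g hg =>
    lm_mul ord hcomp (hS0 g (Finset.mem_filter.1 hg).1) (right_ne_zero_of_mul (hT0 g hg))
  have hinj : Set.InjOn (fun g => lm ord (g * (Q g).unop)) T := by
    intro g hg g' hg' h
    simp only [hlmT g hg, hlmT g' hg'] at h
    have hgS := (Finset.mem_filter.1 hg).1
    have hg'S := (Finset.mem_filter.1 hg').1
    rcases FreeMonoid.exists_eq_mul_or_exists_eq_mul_of_mul_eq_mul h with ⟨d, hd⟩ | ⟨d, hd⟩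
    exacts [(hS g hgS g' hg'S d hd).symm, hS g' hg'S g hgS d hd]
  have hTne : T.Nonempty := by
    by_contra hT
    rw [Finset.not_nonempty_iff_eq_empty.1 hT, Finset.sum_empty] at hsum
    exact hf0 hsum
  rw [hsum] at hf0 ⊢
  obtain ⟨g, hg, hlm⟩ := exists_lm_sum_eq ord hTne hT0 hinj
  exact ⟨g, (Finset.mem_filter.1 hg).1, _, hlm.trans (hlmT g hg)⟩

theorem exists_finset_rightGroebnerBasis (hwo : WellFounded ord.lt) (hcomp : IsMulCompatible ord)
    (hR : ∀ a x : K⟨X⟩, x ∈ I → x * a ∈ I) (G : Finset K⟨X⟩) (hGI : (G : Set K⟨X⟩) ⊆ I)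
    (hIG : (I : Set K⟨X⟩) ⊆ Submodule.span K⟨X⟩ᵐᵒᵖ (G : Set K⟨X⟩)) :
    ∃ T : Finset K⟨X⟩, (T : Set K⟨X⟩) ⊆ I ∧ (∀ t ∈ T, t ≠ 0) ∧
      ∀ f ∈ I, f ≠ 0 → ∃ t ∈ T, ∃ b, lm ord f = lm ord t * b := by
  classical
  set W := lmWitness ord I '' minimalLeadingMonomials ord I
  choose! T hTW hgT using fun g (hg : g ∈ G) =>
    Submodule.mem_span_finite_of_mem_span (le_span_lmWitness hwo hcomp hR (hGI hg))
  have hW : ((G.biUnion T : Finset K⟨X⟩) : Set K⟨X⟩) ⊆ W := by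
    intro t ht
    obtain ⟨g, hg, ht⟩ := Finset.mem_biUnion.1 ht
    exact hTW g hg ht
  have hIT : (I : Set K⟨X⟩) ⊆ Submodule.span K⟨X⟩ᵐᵒᵖ (G.biUnion T : Set K⟨X⟩) :=
    hIG.trans <| Submodule.span_le.2 fun g hg =>
      Submodule.span_mono (Finset.coe_subset.2 (Finset.subset_biUnion_of_mem T hg)) (hgT g hg)
  have hT : ∀ t ∈ G.biUnion T, t ∈ I ∧ t ≠ 0 := fun t ht => by
    obtain ⟨u, hu, rfl⟩ := hW ht
    exact ⟨(lmWitness_spec hu.1).1, (lmWitness_spec hu.1).2.1⟩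
  refine ⟨G.biUnion T, fun t ht => (hT t ht).1, fun t ht => (hT t ht).2, fun f hf hf0 =>
    exists_lm_eq_lm_mul_of_mem_span hcomp (fun t ht => (hT t ht).2) ?_ (hIT hf) hf0⟩
  intro t ht t' ht' d h
  obtain ⟨u, hu, rfl⟩ := hW ht
  obtain ⟨u', hu', rfl⟩ := hW ht'
  exact lmWitness_eq_of_lm_eq_mul hu hu' h

theorem mem_leadingMonomials_of_length_le (hcomp : IsMulCompatible ord)
    (hL : ∀ a x : K⟨X⟩, x ∈ I → a * x ∈ I) (hR : ∀ a x : K⟨X⟩, x ∈ I → x * a ∈ I)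
    {T : Finset K⟨X⟩} (hTI : (T : Set K⟨X⟩) ⊆ I) (hT0 : ∀ t ∈ T, t ≠ 0)
    (hGB : ∀ f ∈ I, f ≠ 0 → ∃ t ∈ T, ∃ b, lm ord f = lm ord t * b)
    {f₀ : K⟨X⟩} (hf₀ : f₀ ∈ I) (hf₀0 : f₀ ≠ 0)
    {m : FreeMonoid (Fin n)} (hm : T.sup (fun t => (lm ord t).length) ≤ m.length) :
    m ∈ leadingMonomials ord I := by
  have hm0 : single m (1 : K) ≠ 0 := by simp
  obtain ⟨t, ht, b, hb⟩ := hGB _ (hL (single m 1) f₀ hf₀) (mul_ne_zero hm0 hf₀0)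
  rw [lm_mul ord hcomp hm0 hf₀0, lm_single ord m one_ne_zero] at hb
  obtain ⟨d, rfl⟩ := FreeMonoid.exists_eq_mul_of_mul_eq_mul_of_length_le hb
    ((Finset.le_sup (f := fun t => (lm ord t).length) ht).trans hm)
  have hd0 : single d (1 : K) ≠ 0 := by simp
  exact ⟨t * single d 1, hR _ _ (hTI ht), mul_ne_zero (hT0 t ht) hd0,
    by rw [lm_mul ord hcomp (hT0 t ht) hd0, lm_single ord d one_ne_zero]⟩

theorem finiteDimensional_quotient_of_finite_compl_leadingMonomials (hwo : WellFounded ord.lt)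
    (hfin : (leadingMonomials ord I)ᶜ.Finite) : FiniteDimensional K (K⟨X⟩ ⧸ I) := by
  set V := Submodule.span K ((fun m => single m (1 : K)) '' (leadingMonomials ord I)ᶜ)
  have hVI : I ⊔ V = ⊤ := by
    refine top_unique (le_of_forall_exists_lm_eq ord hwo fun f _ hf0 => ?_)
    by_cases hm : lm ord f ∈ leadingMonomials ord I
    · obtain ⟨p, hp, hp0, hlm⟩ := hm
      exact ⟨p, ⟨trivial, Submodule.mem_sup_left hp⟩, hp0, hlm⟩
    · exact ⟨single (lm ord f) 1, ⟨trivial, Submodule.mem_sup_right (Submodule.subset_span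
        ⟨_, hm, rfl⟩)⟩, by simp, lm_single ord _ one_ne_zero⟩
  refine Module.finite_def.2 ?_
  rw [← (Submodule.map_mkQ_eq_top I V).2 hVI]
  exact (Submodule.fg_span (hfin.image _)).map _

end LeadingMonomial

theorem finite_rightGroebnerBasis_zeroDimensional_general (K : Type*) [Field K] (n : ℕ)
    (ord : LinearOrder (FreeMonoid (Fin n)))
    (hwo : WellFounded ord.lt)
    (hcomp : ∀ a b m m' : FreeMonoid (Fin n), ord.le m m' → ord.le (a * m * b) (a * m' * b))
    (I : Submodule K (MonoidAlgebra K (FreeMonoid (Fin n))))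
    (hL : ∀ a x : MonoidAlgebra K (FreeMonoid (Fin n)), x ∈ I → a * x ∈ I)
    (hR : ∀ a x : MonoidAlgebra K (FreeMonoid (Fin n)), x ∈ I → x * a ∈ I)
    (hI : I ≠ ⊥)
    (G : Finset (MonoidAlgebra K (FreeMonoid (Fin n))))
    (hgen : (I : Set (MonoidAlgebra K (FreeMonoid (Fin n)))) =
      rightIdealSpan (G : Set (MonoidAlgebra K (FreeMonoid (Fin n))))) :
    FiniteDimensional K (MonoidAlgebra K (FreeMonoid (Fin n)) ⧸ I) := by
  obtain ⟨f₀, hf₀, hf₀0⟩ := (Submodule.ne_bot_iff I).1 hI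
  obtain ⟨T, hTI, hT0, hGB⟩ := exists_finset_rightGroebnerBasis hwo hcomp hR G
    (hgen ▸ subset_rightIdealSpan _) (hgen ▸ rightIdealSpan_subset_span _)
  refine finiteDimensional_quotient_of_finite_compl_leadingMonomials hwo
    ((FreeMonoid.finite_setOf_length_lt (T.sup fun t => (lm ord t).length)).subset fun m hm => ?_)
  by_contra hlen
  exact hm (mem_leadingMonomials_of_length_le hcomp hL hR hTI hT0 hGB hf₀ hf₀0 (not_lt.1 hlen))

/-- **A nonzero two-sided ideal with a finite right Gröbner basis is zero-dimensional.**
Here a two-sided ideal of `K⟨X⟩` is encoded as a `K`-submodule `I` closed under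
multiplication by arbitrary ring elements on both sides.  If `I ≠ {0}` admits a finite
right generating set `G` such that the leading monomial of every nonzero `f ∈ I` is a
right multiple of `lm(g)` for some `g ∈ G`, then the quotient `K⟨X⟩/I` is
finite-dimensional as a `K`-vector space. -/
theorem finite_rightGroebnerBasis_zeroDimensional (K : Type*) [Field K] (n : ℕ)
    (ord : LinearOrder (FreeMonoid (Fin n)))
    (hwo : WellFounded ord.lt)
    (hcomp : ∀ a b m m' : FreeMonoid (Fin n), ord.le m m' → ord.le (a * m * b) (a * m' * b))
    (I : Submodule K (MonoidAlgebra K (FreeMonoid (Fin n))))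
    (hL : ∀ a x : MonoidAlgebra K (FreeMonoid (Fin n)), x ∈ I → a * x ∈ I)
    (hR : ∀ a x : MonoidAlgebra K (FreeMonoid (Fin n)), x ∈ I → x * a ∈ I)
    (hI : I ≠ ⊥)
    (G : Finset (MonoidAlgebra K (FreeMonoid (Fin n))))
    (hgen : (I : Set (MonoidAlgebra K (FreeMonoid (Fin n)))) =
      rightIdealSpan (G : Set (MonoidAlgebra K (FreeMonoid (Fin n)))))
    (hGB : ∀ f ∈ I, f ≠ 0 → ∃ g ∈ G, ∃ b : FreeMonoid (Fin n), lm ord f = lm ord g * b) :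
    FiniteDimensional K (MonoidAlgebra K (FreeMonoid (Fin n)) ⧸ I) :=
  finite_rightGroebnerBasis_zeroDimensional_general K n ord hwo hcomp I hL hR hI G hgen
end

section
/- Let K be a field, X = {x₁,…,xₙ}, I_ρ a right ideal of K⟨X⟩ with right generating set F, and I_ρ^{φ̄} the right ideal of ℬ = K⟨X,T,T⁻¹⟩/J generated by {φ̄(f) : f ∈ F}. Then the set M := { f ∈ K⟨X⟩ : π(ι(f)) ∈ I_ρ^{φ̄} } is a monomial right ideal of K⟨X⟩: M is a right ideal, and for every f ∈ M, every monomial in supp(f) belongs to M. -/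
open scoped BigOperators

/-- The alphabet `X ∪ T ∪ T⁻¹` with `n` letters `xᵢ`, `n` letters `tᵢ` and `n` letters
`tᵢ⁻¹` (one pair `tᵢ, tᵢ⁻¹` for each `xᵢ`). -/
abbrev XTTn (n : ℕ) := Fin n ⊕ (Fin n ⊕ Fin n)

/-- The relations generating the ideal `J ⊆ K⟨X,T,T⁻¹⟩`: the commutators
`xᵢt_j − t_jxᵢ` (`1 ≤ i,j ≤ n`) and `1 − t_j t_j⁻¹` (`1 ≤ j ≤ n`).  The quotient algebra
`ℬ = K⟨X,T,T⁻¹⟩/J` is `RingQuot (Brel K n)` and the quotient map `π` is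
`RingQuot.mkAlgHom K (Brel K n)`. -/
inductive Brel (K : Type*) [Field K] (n : ℕ) :
    FreeAlgebra K (XTTn n) → FreeAlgebra K (XTTn n) → Prop
  | comm (i j : Fin n) :
      Brel K n (FreeAlgebra.ι K (Sum.inl i) * FreeAlgebra.ι K (Sum.inr (Sum.inl j)))
        (FreeAlgebra.ι K (Sum.inr (Sum.inl j)) * FreeAlgebra.ι K (Sum.inl i))
  | inv (j : Fin n) :
      Brel K n
        (FreeAlgebra.ι K (Sum.inr (Sum.inl j)) * FreeAlgebra.ι K (Sum.inr (Sum.inr j))) 1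

/-- The canonical embedding `ι : K⟨X⟩ → K⟨X,T,T⁻¹⟩`, `xᵢ ↦ xᵢ`. -/
noncomputable def embB (K : Type*) [Field K] (n : ℕ) :
    FreeAlgebra K (Fin n) →ₐ[K] FreeAlgebra K (XTTn n) :=
  FreeAlgebra.lift K fun i => FreeAlgebra.ι K (Sum.inl i)

/-- The algebra homomorphism `φ : K⟨X⟩ → K⟨X,T,T⁻¹⟩`, `xᵢ ↦ xᵢtᵢ`. -/
noncomputable def phiB (K : Type*) [Field K] (n : ℕ) :
    FreeAlgebra K (Fin n) →ₐ[K] FreeAlgebra K (XTTn n) :=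
  FreeAlgebra.lift K fun i =>
    FreeAlgebra.ι K (Sum.inl i) * FreeAlgebra.ι K (Sum.inr (Sum.inl i))

/-- The monomial of `K⟨X⟩` corresponding to a word `w ∈ ⟨X⟩`. -/
noncomputable def monoW (K : Type*) [Field K] {n : ℕ} (w : FreeMonoid (Fin n)) :
    FreeAlgebra K (Fin n) :=
  ((FreeMonoid.toList w).map (FreeAlgebra.ι K)).prod

/-!
Let `P` be the monoid presented by the relations of `J` (`BMonoid n`); then `ℬ` is the monoid
algebra `K[P]`, and all we use is an algebra map `ℬ → K[P]` with a left inverse. Give `p ∈ P` the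
weight `ν(p) = deg_T(p)⁻¹ · x(p)` in the free group on `X`, where the homomorphism `deg_T` sends
`tᵢ ↦ xᵢ`, `tᵢ⁻¹ ↦ xᵢ⁻¹`, `xᵢ ↦ 1`, and `x` sends `xᵢ ↦ xᵢ` and the `t`-letters to `1`. Since
`φ(xᵢ) = xᵢtᵢ`, left multiplication by `φ(u)` multiplies both `deg_T` and `x` on the left by `u`,
so it preserves `ν`; and `ν(ι(w)) = w`. Hence the projection of `ℬ` onto weight `w` commutes with
left multiplication by every `φ̄(g)`, so it maps `I_ρ^{φ̄}` into itself, and it sends `π(ι(f))` to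
`c_w(f) · π(ι(w))`.
-/

section RightIdealSpan

variable {A : Type*} [Semiring A] {S : Set A} {x y : A}

theorem zero_mem_rightIdealSpan : (0 : A) ∈ rightIdealSpan S :=
  ⟨0, Fin.elim0, Fin.elim0, fun i => i.elim0, by simp⟩

theorem add_mem_rightIdealSpan (hx : x ∈ rightIdealSpan S) (hy : y ∈ rightIdealSpan S) :
    x + y ∈ rightIdealSpan S := by
  obtain ⟨d, f, q, hf, rfl⟩ := hx
  obtain ⟨e, g, r, hg, rfl⟩ := hy
  refine ⟨d + e, Fin.append f g, Fin.append q r,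
    Fin.addCases (by simpa using hf) (by simpa using hg), ?_⟩
  simp [Fin.sum_univ_add]

theorem mul_mem_rightIdealSpan (hx : x ∈ rightIdealSpan S) (q : A) :
    x * q ∈ rightIdealSpan S := by
  obtain ⟨d, f, r, hf, rfl⟩ := hx
  exact ⟨d, f, fun i => r i * q, hf, by simp [Finset.sum_mul, mul_assoc]⟩

theorem map_mem_rightIdealSpan {G : Type*} [FunLike G A A] [AddMonoidHomClass G A A] {Λ : G}
    (hΛ : ∀ s ∈ S, ∀ z, Λ (s * z) = s * Λ z) (hx : x ∈ rightIdealSpan S) :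
    Λ x ∈ rightIdealSpan S := by
  obtain ⟨d, f, q, hf, rfl⟩ := hx
  exact ⟨d, f, fun i => Λ (q i), hf, by simp [map_sum, hΛ _ (hf _)]⟩

end RightIdealSpan

namespace FreeMonoid

variable {α : Type*}

def toFreeGroup : FreeMonoid α →* FreeGroup α := lift FreeGroup.of

theorem toFreeGroup_eq_mk (w : FreeMonoid α) :
    toFreeGroup w = FreeGroup.mk (w.toList.map (·, true)) := by
  induction w using FreeMonoid.recOn with
  | one => rfl
  | of_mul i w ih =>
    rw [map_mul, ih, toFreeGroup, lift_eval_of, FreeGroup.of, FreeGroup.mul_mk]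
    rfl

theorem toFreeGroup_injective : Function.Injective (toFreeGroup (α := α)) := by
  classical
  have hword (w : FreeMonoid α) : (toFreeGroup w).toWord = w.toList.map (·, true) := by
    rw [toFreeGroup_eq_mk, FreeGroup.toWord_mk, FreeGroup.IsReduced.reduce_eq]
    simpa [FreeGroup.IsReduced, List.isChain_map] using
      List.isChain_iff_getElem.mpr fun _ _ => trivial
  intro u v h
  have := congrArg FreeGroup.toWord h
  rw [hword, hword] at this
  exact toList.injective (List.map_injective_iff.mpr (fun a b hab => congrArg Prod.fst hab) this)

end FreeMonoid

namespace MonoidAlgebra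

variable {K M N Y : Type*} [Semiring K] [Monoid M] [DecidableEq Y] (ν : M → Y) (y : Y)

def weightProj : K[M] →ₗ[K] K[M] where
  toFun z := ofCoeff (z.coeff.filter (ν · = y))
  map_add' _ _ := by simp [Finsupp.filter_add]
  map_smul' _ _ := by simp [Finsupp.filter_smul]

theorem weightProj_single (a : M) (c : K) :
    weightProj ν y (single a c) = if ν a = y then single a c else 0 := by
  split_ifs with h
  · exact congrArg ofCoeff (Finsupp.filter_single_of_pos _ h)
  · exact congrArg ofCoeff (Finsupp.filter_single_of_neg _ h)

theorem weightProj_single_mul {a : M} (ha : ∀ p, ν (a * p) = ν p) (c : K) (z : K[M]) :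
    weightProj ν y (single a c * z) = single a c * weightProj ν y z := by
  induction z using induction_linear with
  | zero => simp
  | add z z' hz hz' => simp only [mul_add, map_add, hz, hz']
  | single b r =>
    rw [single_mul_single, weightProj_single, weightProj_single, ha]
    split_ifs <;> simp [single_mul_single]

theorem weightProj_mapDomain_mul {h : N → M} (hh : ∀ u p, ν (h u * p) = ν p) (x : K[N])
    (z : K[M]) : weightProj ν y (mapDomain h x * z) = mapDomain h x * weightProj ν y z := by
  induction x using induction_linear with
  | zero => simp [mapDomain_zero]
  | add x x' hx hx' => simp only [mapDomain_add, add_mul, map_add, hx, hx']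
  | single u c => rw [mapDomain_single, weightProj_single_mul ν y (hh u)]

theorem weightProj_mapDomain {h : N → M} (hh : Function.Injective (ν ∘ h)) (w : N) (x : K[N]) :
    weightProj ν (ν (h w)) (mapDomain h x) = single (h w) (x.coeff w) := by
  classical
  induction x using induction_linear with
  | zero => simp [mapDomain_zero]
  | add x x' hx hx' =>
    simp only [mapDomain_add, map_add, hx, hx', coeff_add, Finsupp.add_apply, single_add]
  | single u c =>
    rw [mapDomain_single, weightProj_single, coeff_single, Finsupp.single_apply]
    by_cases hu : u = w
    · simp [hu]
    · rw [if_neg hu, if_neg (show ν (h u) ≠ ν (h w) from fun h' => hu (hh h')), single_zero]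

end MonoidAlgebra

inductive BMonoidRel (n : ℕ) : FreeMonoid (XTTn n) → FreeMonoid (XTTn n) → Prop
  | comm (i j : Fin n) :
      BMonoidRel n (.of (.inl i) * .of (.inr (.inl j))) (.of (.inr (.inl j)) * .of (.inl i))
  | inv (j : Fin n) : BMonoidRel n (.of (.inr (.inl j)) * .of (.inr (.inr j))) 1

abbrev BMonoid (n : ℕ) := PresentedMonoid (BMonoidRel n)

namespace BMonoid

variable {n : ℕ}

def tDegree : BMonoid n →* FreeGroup (Fin n) :=
  PresentedMonoid.lift (Sum.elim 1 (Sum.elim FreeGroup.of fun j => (FreeGroup.of j)⁻¹))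
    (by rintro _ _ (_ | _) <;> simp)

def xContent : BMonoid n →* FreeGroup (Fin n) :=
  PresentedMonoid.lift (Sum.elim FreeGroup.of 1) (by rintro _ _ (_ | _) <;> simp)

def weight (p : BMonoid n) : FreeGroup (Fin n) := (tDegree p)⁻¹ * xContent p

def xWord : FreeMonoid (Fin n) →* BMonoid n := FreeMonoid.lift fun i => .of _ (.inl i)

def phiWord : FreeMonoid (Fin n) →* BMonoid n :=
  FreeMonoid.lift fun i => .of _ (.inl i) * .of _ (.inr (.inl i))

theorem tDegree_comp_xWord :
    tDegree.comp xWord = (1 : FreeMonoid (Fin n) →* FreeGroup (Fin n)) :=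
  FreeMonoid.hom_eq fun _ => by simp [tDegree, xWord]

theorem xContent_comp_xWord : xContent.comp xWord = FreeMonoid.toFreeGroup (α := Fin n) :=
  FreeMonoid.hom_eq fun _ => by simp [xContent, xWord, FreeMonoid.toFreeGroup]

theorem tDegree_comp_phiWord : tDegree.comp phiWord = FreeMonoid.toFreeGroup (α := Fin n) :=
  FreeMonoid.hom_eq fun _ => by simp [tDegree, phiWord, FreeMonoid.toFreeGroup]

theorem xContent_comp_phiWord : xContent.comp phiWord = FreeMonoid.toFreeGroup (α := Fin n) :=
  FreeMonoid.hom_eq fun _ => by simp [xContent, phiWord, FreeMonoid.toFreeGroup]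

theorem weight_xWord (w : FreeMonoid (Fin n)) : weight (xWord w) = w.toFreeGroup := by
  simp [weight, ← MonoidHom.comp_apply, tDegree_comp_xWord, xContent_comp_xWord]

theorem weight_phiWord_mul (u : FreeMonoid (Fin n)) (p : BMonoid n) :
    weight (phiWord u * p) = weight p := by
  simp [weight, ← MonoidHom.comp_apply, tDegree_comp_phiWord, xContent_comp_phiWord, mul_assoc]

end BMonoid

section BAlgebra

open MonoidAlgebra

variable (K : Type*) [Field K] (n : ℕ)

noncomputable def toBMonoidAlgebra : RingQuot (Brel K n) →ₐ[K] K[BMonoid n] :=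
  RingQuot.liftAlgHom K ⟨FreeAlgebra.lift K fun s => of K _ (.of _ s), by
    rintro _ _ (⟨i, j⟩ | j)
    · rw [map_mul, map_mul, FreeAlgebra.lift_ι_apply, FreeAlgebra.lift_ι_apply, ← map_mul,
        ← map_mul]
      exact congrArg _ (PresentedMonoid.mk_eq_mk_of_rel (BMonoidRel.comm i j))
    · rw [map_mul, map_one, FreeAlgebra.lift_ι_apply, FreeAlgebra.lift_ι_apply, ← map_mul,
        ← map_one (of K (BMonoid n))]
      exact congrArg _ (PresentedMonoid.mk_eq_mk_of_rel (BMonoidRel.inv j))⟩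

noncomputable def ofBMonoidAlgebra : K[BMonoid n] →ₐ[K] RingQuot (Brel K n) :=
  lift K _ _ (PresentedMonoid.lift (fun s => RingQuot.mkAlgHom K (Brel K n) (FreeAlgebra.ι K s))
    (by
      rintro _ _ (⟨i, j⟩ | j) <;> simp only [map_mul, map_one, FreeMonoid.lift_eval_of]
      · simpa only [map_mul] using RingQuot.mkAlgHom_rel K (Brel.comm i j)
      · simpa only [map_mul, map_one] using RingQuot.mkAlgHom_rel K (Brel.inv j)))

theorem ofBMonoidAlgebra_toBMonoidAlgebra (z : RingQuot (Brel K n)) :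
    ofBMonoidAlgebra K n (toBMonoidAlgebra K n z) = z := by
  have : (ofBMonoidAlgebra K n).comp (toBMonoidAlgebra K n) = AlgHom.id K _ :=
    RingQuot.ringQuot_ext' _ _ _ <| FreeAlgebra.hom_ext <| funext fun s => by
      simp [toBMonoidAlgebra, ofBMonoidAlgebra]
  exact DFunLike.congr_fun this z

end BAlgebra

section Projection

open MonoidAlgebra BMonoid FreeAlgebra

variable {K : Type*} [Field K] {n : ℕ}

theorem toBMonoidAlgebra_mkAlgHom_embB (f : FreeAlgebra K (Fin n)) :
    toBMonoidAlgebra K n (RingQuot.mkAlgHom K (Brel K n) (embB K n f)) =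
      mapDomain xWord (equivMonoidAlgebraFreeMonoid f) := by
  have : (toBMonoidAlgebra K n).comp ((RingQuot.mkAlgHom K (Brel K n)).comp (embB K n)) =
      (mapDomainAlgHom K K xWord).comp equivMonoidAlgebraFreeMonoid.toAlgHom :=
    hom_ext <| funext fun i => by
      simp [toBMonoidAlgebra, embB, xWord, equivMonoidAlgebraFreeMonoid]
  exact DFunLike.congr_fun this f

theorem toBMonoidAlgebra_mkAlgHom_phiB (g : FreeAlgebra K (Fin n)) :
    toBMonoidAlgebra K n (RingQuot.mkAlgHom K (Brel K n) (phiB K n g)) =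
      mapDomain phiWord (equivMonoidAlgebraFreeMonoid g) := by
  have : (toBMonoidAlgebra K n).comp ((RingQuot.mkAlgHom K (Brel K n)).comp (phiB K n)) =
      (mapDomainAlgHom K K phiWord).comp equivMonoidAlgebraFreeMonoid.toAlgHom :=
    hom_ext <| funext fun i => by
      simp [toBMonoidAlgebra, phiB, phiWord, equivMonoidAlgebraFreeMonoid]
  exact DFunLike.congr_fun this g

theorem equivMonoidAlgebraFreeMonoid_monoW (w : FreeMonoid (Fin n)) :
    equivMonoidAlgebraFreeMonoid (monoW K w) = single w 1 := by
  rw [eq_comm, ← AlgEquiv.symm_apply_eq]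
  simp [equivMonoidAlgebraFreeMonoid, monoW, FreeMonoid.lift_apply]

variable (K n) in
noncomputable def monomialProj (w : FreeMonoid (Fin n)) :
    RingQuot (Brel K n) →ₗ[K] RingQuot (Brel K n) :=
  (ofBMonoidAlgebra K n).toLinearMap ∘ₗ weightProj weight w.toFreeGroup ∘ₗ
    (toBMonoidAlgebra K n).toLinearMap

theorem monomialProj_mkAlgHom_embB (w : FreeMonoid (Fin n)) (f : FreeAlgebra K (Fin n)) :
    monomialProj K n w (RingQuot.mkAlgHom K (Brel K n) (embB K n f)) =
      (equivMonoidAlgebraFreeMonoid f).coeff w •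
        RingQuot.mkAlgHom K (Brel K n) (embB K n (monoW K w)) := by
  have hinj : Function.Injective (weight ∘ xWord (n := n)) := fun u v h =>
    FreeMonoid.toFreeGroup_injective (by simpa [weight_xWord] using h)
  have hproj := weightProj_mapDomain weight hinj w (equivMonoidAlgebraFreeMonoid f)
  rw [weight_xWord] at hproj
  calc monomialProj K n w (RingQuot.mkAlgHom K (Brel K n) (embB K n f))
      = ofBMonoidAlgebra K n (single (xWord w) ((equivMonoidAlgebraFreeMonoid f).coeff w)) := by
        simp [monomialProj, toBMonoidAlgebra_mkAlgHom_embB, hproj]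
    _ = (equivMonoidAlgebraFreeMonoid f).coeff w •
          ofBMonoidAlgebra K n (toBMonoidAlgebra K n
            (RingQuot.mkAlgHom K (Brel K n) (embB K n (monoW K w)))) := by
        rw [toBMonoidAlgebra_mkAlgHom_embB, equivMonoidAlgebraFreeMonoid_monoW, mapDomain_single,
          ← map_smul, smul_single', mul_one]
    _ = _ := by rw [ofBMonoidAlgebra_toBMonoidAlgebra]

theorem monomialProj_mkAlgHom_phiB_mul (w : FreeMonoid (Fin n)) (g : FreeAlgebra K (Fin n))
    (z : RingQuot (Brel K n)) :
    monomialProj K n w (RingQuot.mkAlgHom K (Brel K n) (phiB K n g) * z) =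
      RingQuot.mkAlgHom K (Brel K n) (phiB K n g) * monomialProj K n w z := by
  simp only [monomialProj, LinearMap.comp_apply, AlgHom.toLinearMap_apply, map_mul,
    toBMonoidAlgebra_mkAlgHom_phiB]
  rw [weightProj_mapDomain_mul weight _ weight_phiWord_mul, map_mul,
    ← toBMonoidAlgebra_mkAlgHom_phiB, ofBMonoidAlgebra_toBMonoidAlgebra]

end Projection

/-- **The contraction `M = { f ∈ K⟨X⟩ : π(ι(f)) ∈ I_ρ^{φ̄} }` is a monomial right ideal.**
Here `I_ρ^{φ̄}` is the right ideal of `ℬ = K⟨X,T,T⁻¹⟩/J` generated by `{φ̄(f) : f ∈ F}`.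
The set `M` is a right ideal of `K⟨X⟩` (it contains `0` and is closed under addition and
under right multiplication by arbitrary elements), and for every `f ∈ M` every monomial in
the support of `f` (computed via the identification of `K⟨X⟩` with the monoid algebra of
the free monoid `⟨X⟩`) again belongs to `M`. -/
theorem contraction_is_monomial_rightIdeal (K : Type*) [Field K] (n : ℕ)
    (F : Set (FreeAlgebra K (Fin n)))
    (M : Set (FreeAlgebra K (Fin n)))
    (hM : M = {f | RingQuot.mkAlgHom K (Brel K n) (embB K n f) ∈
      rightIdealSpan ((fun g => RingQuot.mkAlgHom K (Brel K n) (phiB K n g)) '' F)}) :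
    (0 : FreeAlgebra K (Fin n)) ∈ M ∧
      (∀ f ∈ M, ∀ g ∈ M, f + g ∈ M) ∧
      (∀ f ∈ M, ∀ q : FreeAlgebra K (Fin n), f * q ∈ M) ∧
      (∀ f ∈ M, ∀ w ∈ (FreeAlgebra.equivMonoidAlgebraFreeMonoid (R := K) f).coeff.support,
        monoW K w ∈ M) := by
  subst hM
  refine ⟨by simpa using zero_mem_rightIdealSpan,
    fun f hf g hg => by simpa using add_mem_rightIdealSpan hf hg,
    fun f hf q => by simpa using mul_mem_rightIdealSpan hf _, fun f hf w hw => ?_⟩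
  set c := (FreeAlgebra.equivMonoidAlgebraFreeMonoid f).coeff w
  have hc : c ≠ 0 := Finsupp.mem_support_iff.mp hw
  have hΛ : ∀ s ∈ (fun g => RingQuot.mkAlgHom K (Brel K n) (phiB K n g)) '' F, ∀ z,
      (c⁻¹ • monomialProj K n w) (s * z) = s * (c⁻¹ • monomialProj K n w) z := by
    rintro _ ⟨g, -, rfl⟩ z
    simp [monomialProj_mkAlgHom_phiB_mul]
  have hproj := map_mem_rightIdealSpan hΛ hf
  rwa [LinearMap.smul_apply, monomialProj_mkAlgHom_embB, smul_smul, inv_mul_cancel₀ hc,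
    one_smul] at hproj
end
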